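/- arXiv:2502.07334 — 7 statements merged into one kernel-verified Lean document; each statement's English description precedes it below -/
import Mathlib

section
/- Let X be a compact metric space. X is totally disconnected if and only if there exists an ultrametric D on X equivalent to the given metric d (i.e., inducing the same topology). -/
open Filter Topology Metric Set

/-- A periodic structure: a sequence of positive integers with `m j ∣ m (j+1)` and `m j → ∞`. -/
structure PeriodicStructure where
  m : ℕ → ℕ
  pos : ∀ j, 0 < m j
  dvd : ∀ j, m j ∣ m (j + 1)
  tendsto : Filter.Tendsto m Filter.atTop Filter.atTop

/-- The odometer space `X_m` of a periodic structure. -/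
def PeriodicStructure.space (p : PeriodicStructure) : Type :=
  {x : ℕ → ℕ // ∀ j, x j < p.m j ∧ x (j + 1) % p.m j = x j}

instance (p : PeriodicStructure) : TopologicalSpace p.space :=
  inferInstanceAs (TopologicalSpace
    {x : ℕ → ℕ // ∀ j, x j < p.m j ∧ x (j + 1) % p.m j = x j})

/-- The odometer map `g_m` (adding 1 coordinatewise mod `m j`). -/
def PeriodicStructure.step (p : PeriodicStructure) (x : p.space) : p.space :=
  ⟨fun j => (x.1 j + 1) % p.m j, by
    intro j
    refine ⟨Nat.mod_lt _ (p.pos j), ?_⟩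
    show (x.1 (j + 1) + 1) % p.m (j + 1) % p.m j = (x.1 j + 1) % p.m j
    rw [Nat.mod_mod_of_dvd _ (p.dvd j), ← (x.2 j).2, Nat.add_mod]
    exact Nat.add_mod_mod _ _ _⟩

/-- `S` is an odometer for `f`: `f` restricted to `S` is topologically conjugate to
an odometer `g_m : X_m → X_m`. -/
def IsOdometer {X : Type*} [TopologicalSpace X] (f : X → X) (S : Set X) : Prop :=
  ∃ p : PeriodicStructure, ∃ h : p.space ≃ₜ S,
    ∀ z : p.space, f ((h z : X)) = ((h (p.step z) : X))

/-- `S` is a periodic orbit of `f`. -/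
def IsPeriodicOrbit {X : Type*} (f : X → X) (S : Set X) : Prop :=
  ∃ x ∈ S, ∃ i : ℕ, 0 < i ∧ f^[i] x = x ∧ S = {y | ∃ j < i, f^[j] x = y}

/-- The ω-limit set of a sequence of points. -/
def omegaLimitSeq {X : Type*} [TopologicalSpace X] (x : ℕ → X) : Set X :=
  {y | ∃ φ : ℕ → ℕ, StrictMono φ ∧
    Filter.Tendsto (fun j => x (φ j)) Filter.atTop (nhds y)}

/-- The ω-limit set `ω(x, f)` of a point. -/
def omegaLimitPt {X : Type*} [TopologicalSpace X] (f : X → X) (x : X) : Set X :=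
  omegaLimitSeq fun i => f^[i] x

/-- `M` is a minimal set for `f`. -/
def IsMinimalSet {X : Type*} [TopologicalSpace X] (f : X → X) (M : Set X) : Prop :=
  M.Nonempty ∧ IsClosed M ∧ Set.MapsTo f M M ∧
    ∀ S ⊆ M, IsClosed S → Set.MapsTo f S S → S = ∅ ∨ S = M

/-- `x` is a minimal point for `f`. -/
def IsMinimalPoint {X : Type*} [TopologicalSpace X] (f : X → X) (x : X) : Prop :=
  IsMinimalSet f (closure (Set.range fun i => f^[i] x))

/-- `x` is a regularly recurrent point for `f`. -/
def RegularlyRecurrent {X : Type*} [PseudoMetricSpace X] (f : X → X) (x : X) : Prop :=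
  ∀ ε > 0, ∃ n : ℕ, 0 < n ∧ ∀ k : ℕ, dist x (f^[k * n] x) ≤ ε

/-- `f` has the shadowing property. -/
def ShadowingProperty {X : Type*} [PseudoMetricSpace X] (f : X → X) : Prop :=
  ∀ ε > 0, ∃ δ > 0, ∀ ξ : ℕ → X,
    (∀ i, dist (f (ξ i)) (ξ (i + 1)) ≤ δ) → ∃ y, ∀ i, dist (f^[i] y) (ξ i) ≤ ε

structure IsCompatibleUltrametric {X : Type*} [TopologicalSpace X] (D : X → X → ℝ) : Prop where
  self_eq_zero : ∀ x, D x x = 0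
  eq_of_eq_zero : ∀ x y, D x y = 0 → x = y
  symm : ∀ x y, D x y = D y x
  le_max : ∀ x y z, D x z ≤ max (D x y) (D y z)
  isOpen_iff : ∀ s : Set X, IsOpen s ↔ ∀ x ∈ s, ∃ ε > (0 : ℝ), {y | D x y < ε} ⊆ s

namespace IsCompatibleUltrametric

variable {X : Type*} [TopologicalSpace X] {D : X → X → ℝ}

theorem nonneg (hD : IsCompatibleUltrametric D) (x y : X) : 0 ≤ D x y := by
  simpa [hD.self_eq_zero, hD.symm y x] using hD.le_max x y x

theorem isClopen_ball (hD : IsCompatibleUltrametric D) (x : X) {r : ℝ} (hr : 0 < r) :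
    IsClopen {y | D x y < r} := by
  refine ⟨⟨(hD.isOpen_iff _).2 fun y hy => ⟨r, hr, fun z hz hxz => hy ?_⟩⟩,
    (hD.isOpen_iff _).2 fun y hy => ⟨r, hr, fun z hz => ?_⟩⟩
  · calc D x y ≤ max (D x z) (D z y) := hD.le_max x z y
      _ < r := max_lt hxz (hD.symm z y ▸ hz)
  · exact (hD.le_max x y z).trans_lt (max_lt hy hz)

theorem totallySeparatedSpace (hD : IsCompatibleUltrametric D) : TotallySeparatedSpace X := by
  refine totallySeparatedSpace_iff_exists_isClopen.2 fun x y hxy => ?_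
  have hpos : 0 < D x y := (hD.nonneg x y).lt_of_ne fun h => hxy (hD.eq_of_eq_zero x y h.symm)
  refine ⟨{z | D x z < D x y}, hD.isClopen_ball x hpos, ?_, ?_⟩
  · simpa [hD.self_eq_zero] using hpos
  · simp

end IsCompatibleUltrametric

theorem Topology.IsEmbedding.isCompatibleUltrametric_dist {X Y : Type*} [TopologicalSpace X]
    [MetricSpace Y] [IsUltrametricDist Y] {e : X → Y} (he : IsEmbedding e) :
    IsCompatibleUltrametric fun x y => dist (e x) (e y) where
  self_eq_zero x := dist_self _
  eq_of_eq_zero x y h := he.injective (dist_eq_zero.1 h)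
  symm x y := dist_comm _ _
  le_max x y z := IsUltrametricDist.dist_triangle_max _ _ _
  isOpen_iff s := by
    simp only [isOpen_iff_mem_nhds, he.isInducing.nhds_eq_comap,
      (nhds_basis_ball.comap e).mem_iff, preimage, mem_ball, dist_comm, gt_iff_lt]

theorem exists_nat_isClopen_separating (X : Type*) [TopologicalSpace X] [CompactSpace X]
    [T2Space X] [TotallyDisconnectedSpace X] [SecondCountableTopology X] :
    ∃ u : ℕ → Set X, (∀ n, IsClopen (u n)) ∧ ∀ x y, x ≠ y → ∃ n, x ∈ u n ∧ y ∉ u n := by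
  obtain ⟨B, hB, hBc, hBasis⟩ := isTopologicalBasis_isClopen.exists_countable (α := X)
  -- `∅` is added only to make the family nonempty, so that it can be enumerated by `ℕ`.
  obtain ⟨u, hu⟩ := (hBc.insert ∅).exists_eq_range (insert_nonempty _ _)
  refine ⟨u, fun n => ?_, fun x y hxy => ?_⟩
  · obtain h | h : u n ∈ insert ∅ B := hu ▸ mem_range_self n
    · exact h ▸ isClopen_empty
    · exact hB h
  · obtain ⟨c, hcB, hxc, hcy⟩ :=
      hBasis.exists_subset_of_mem_open (mem_compl_singleton_iff.2 hxy) isOpen_compl_singleton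
    obtain ⟨n, hn⟩ : c ∈ range u := hu ▸ mem_insert_of_mem _ hcB
    exact ⟨n, hn ▸ hxc, fun hy => hcy (hn ▸ hy) rfl⟩

theorem exists_isEmbedding_nat_bool (X : Type*) [TopologicalSpace X] [CompactSpace X]
    [T2Space X] [TotallyDisconnectedSpace X] [SecondCountableTopology X] :
    ∃ e : X → ℕ → Bool, IsEmbedding e := by
  obtain ⟨u, hu, hsep⟩ := exists_nat_isClopen_separating X
  refine ⟨fun x n => (u n).boolIndicator x, IsClosedEmbedding.isEmbedding ?_⟩
  refine (continuous_pi fun n => (continuous_boolIndicator_iff_isClopen _).2 (hu n))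
    |>.isClosedEmbedding fun x y hxy => by_contra fun hne => ?_
  obtain ⟨n, hx, hy⟩ := hsep x y hne
  have := congrFun hxy n
  simp [Set.boolIndicator, hx, hy] at this

theorem exists_isCompatibleUltrametric (X : Type*) [TopologicalSpace X] [CompactSpace X]
    [T2Space X] [TotallyDisconnectedSpace X] [SecondCountableTopology X] :
    ∃ D : X → X → ℝ, IsCompatibleUltrametric D := by
  obtain ⟨e, he⟩ := exists_isEmbedding_nat_bool X
  let := PiNat.metricSpace (E := fun _ : ℕ => Bool)
  have : IsUltrametricDist (ℕ → Bool) := ⟨PiNat.dist_triangle_nonarch⟩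
  exact ⟨_, he.isCompatibleUltrametric_dist⟩

theorem totallyDisconnected_iff_ultrametric {X : Type*} [MetricSpace X] [CompactSpace X] :
    TotallyDisconnectedSpace X ↔
      ∃ D : X → X → ℝ,
        (∀ x, D x x = 0) ∧
        (∀ x y, D x y = 0 → x = y) ∧
        (∀ x y, D x y = D y x) ∧
        (∀ x y z, D x z ≤ max (D x y) (D y z)) ∧
        (∀ s : Set X, IsOpen s ↔ ∀ x ∈ s, ∃ ε > (0 : ℝ), {y | D x y < ε} ⊆ s) := by
  constructor
  · intro
    obtain ⟨D, hD⟩ := exists_isCompatibleUltrametric X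
    exact ⟨D, hD.self_eq_zero, hD.eq_of_eq_zero, hD.symm, hD.le_max, hD.isOpen_iff⟩
  · rintro ⟨D, h₀, h₁, h₂, h₃, h₄⟩
    have := (IsCompatibleUltrametric.mk h₀ h₁ h₂ h₃ h₄).totallySeparatedSpace
    infer_instance
end

section
/- Let f : X → X be a surjective equicontinuous continuous map of a compact metric space. Then f is a homeomorphism and f^{-1} is equicontinuous. -/
open Filter Topology Metric Set

/-!
The orbit distance `D(x, y) = sup_i d(f^i x, f^i y)` is a metric dominating `d` which `f` does
not increase and which, by equicontinuity, is small whenever `d` is. Such an `f`, if surjective,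
is a `D`-isometry: choose backward orbits `u`, `v` of `x` and `y`; by compactness `u n, u m` and
`v n, v m` are simultaneously close for some `n < m`, so pushing forward by `f^(n+1)` gives
points `a`, `b`, `D`-close to `f x`, `f y`, with `f^(m-n-1)` sending them to `x`, `y`. Hence
`D(x, y) ≤ D(a, b) ≤ D(f x, f y) + ε`. So `f` is injective, its inverse is continuous by
compactness, and the inverse preserves `D` too, which makes its iterates equicontinuous.
-/

def IterateEquicontinuous {X : Type*} [PseudoMetricSpace X] (f : X → X) : Prop :=
  ∀ ε > (0 : ℝ), ∃ δ > (0 : ℝ), ∀ x y : X, dist x y ≤ δ →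
    ∀ i : ℕ, dist (f^[i] x) (f^[i] y) ≤ ε

noncomputable def orbitDist {X : Type*} [PseudoMetricSpace X] (f : X → X) (x y : X) : ℝ :=
  ⨆ i, dist (f^[i] x) (f^[i] y)

lemma orbitDist_comm {X : Type*} [PseudoMetricSpace X] (f : X → X) (x y : X) :
    orbitDist f x y = orbitDist f y x := by
  simp only [orbitDist, dist_comm]

section Bounded

variable {X : Type*} [PseudoMetricSpace X] [BoundedSpace X] (f : X → X)

lemma bddAbove_range_dist_iterate (x y : X) :
    BddAbove (range fun i : ℕ => dist (f^[i] x) (f^[i] y)) := by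
  obtain ⟨C, hC⟩ := boundedSpace_iff.1 ‹BoundedSpace X›
  exact ⟨C, by rintro _ ⟨i, rfl⟩; exact hC _ _⟩

lemma dist_iterate_le_orbitDist (i : ℕ) (x y : X) :
    dist (f^[i] x) (f^[i] y) ≤ orbitDist f x y :=
  le_ciSup (bddAbove_range_dist_iterate f x y) i

lemma dist_le_orbitDist (x y : X) : dist x y ≤ orbitDist f x y :=
  dist_iterate_le_orbitDist f 0 x y

lemma orbitDist_triangle (x y z : X) : orbitDist f x z ≤ orbitDist f x y + orbitDist f y z :=
  ciSup_le fun i => (dist_triangle _ (f^[i] y) _).trans <|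
    add_le_add (dist_iterate_le_orbitDist f i x y) (dist_iterate_le_orbitDist f i y z)

lemma orbitDist_map_le (x y : X) : orbitDist f (f x) (f y) ≤ orbitDist f x y :=
  ciSup_le fun i => by
    simpa only [← Function.iterate_succ_apply] using dist_iterate_le_orbitDist f (i + 1) x y

lemma orbitDist_iterate_le (k : ℕ) (x y : X) :
    orbitDist f (f^[k] x) (f^[k] y) ≤ orbitDist f x y := by
  induction k with
  | zero => rfl
  | succ k ih =>
    simpa only [Function.iterate_succ_apply'] using (orbitDist_map_le f _ _).trans ih

lemma iterateEquicontinuous_iff_orbitDist :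
    IterateEquicontinuous f ↔
      ∀ ε > (0 : ℝ), ∃ δ > (0 : ℝ), ∀ x y : X, dist x y ≤ δ → orbitDist f x y ≤ ε := by
  refine forall₂_congr fun ε _ => exists_congr fun δ => and_congr_right' <|
    forall₂_congr fun x y => imp_congr_right fun _ => ?_
  exact ⟨ciSup_le, fun h i => (dist_iterate_le_orbitDist f i x y).trans h⟩

end Bounded

lemma exists_lt_dist_lt_of_compactSpace {Y : Type*} [PseudoMetricSpace Y] [CompactSpace Y]
    (w : ℕ → Y) {δ : ℝ} (hδ : 0 < δ) : ∃ n m, n < m ∧ dist (w n) (w m) < δ := by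
  obtain ⟨L, -, φ, hφ, hconv⟩ := isCompact_univ.tendsto_subseq (x := w) fun n => mem_univ _
  obtain ⟨N, hN⟩ := Metric.cauchySeq_iff.1 hconv.cauchySeq δ hδ
  exact ⟨φ N, φ (N + 1), hφ N.lt_succ_self, hN N le_rfl (N + 1) N.le_succ⟩

section Compact

variable {X : Type*} [PseudoMetricSpace X] [CompactSpace X] {f : X → X}

lemma exists_iterate_eq_orbitDist_map_le (hsurj : Function.Surjective f)
    (heq : IterateEquicontinuous f) (x y : X) {ε : ℝ} (hε : 0 < ε) :
    ∃ k a b, f^[k] a = x ∧ f^[k] b = y ∧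
      orbitDist f (f x) a ≤ ε ∧ orbitDist f (f y) b ≤ ε := by
  obtain ⟨δ, hδ, hsmall⟩ := (iterateEquicontinuous_iff_orbitDist f).1 heq ε hε
  choose u hu using fun n => (hsurj.iterate n) x
  choose v hv using fun n => (hsurj.iterate n) y
  obtain ⟨n, m, hnm, hclose⟩ := exists_lt_dist_lt_of_compactSpace (fun n => (u n, v n)) hδ
  rw [Prod.dist_eq, max_lt_iff] at hclose
  obtain ⟨k, rfl⟩ : ∃ k, m = k + (n + 1) := ⟨m - n - 1, by omega⟩
  refine ⟨k, f^[n + 1] (u (k + (n + 1))), f^[n + 1] (v (k + (n + 1))), ?_, ?_, ?_, ?_⟩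
  · rw [← Function.iterate_add_apply, hu]
  · rw [← Function.iterate_add_apply, hv]
  · rw [← hu n, ← Function.iterate_succ_apply' f n]
    exact (orbitDist_iterate_le f _ _ _).trans (hsmall _ _ hclose.1.le)
  · rw [← hv n, ← Function.iterate_succ_apply' f n]
    exact (orbitDist_iterate_le f _ _ _).trans (hsmall _ _ hclose.2.le)

lemma orbitDist_map_eq (hsurj : Function.Surjective f) (heq : IterateEquicontinuous f)
    (x y : X) : orbitDist f (f x) (f y) = orbitDist f x y := by
  refine le_antisymm (orbitDist_map_le f x y) (le_of_forall_pos_le_add fun ε hε => ?_)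
  obtain ⟨k, a, b, hax, hby, ha, hb⟩ :=
    exists_iterate_eq_orbitDist_map_le hsurj heq x y (half_pos hε)
  calc orbitDist f x y
      = orbitDist f (f^[k] a) (f^[k] b) := by rw [hax, hby]
    _ ≤ orbitDist f a b := orbitDist_iterate_le f k a b
    _ ≤ orbitDist f (f x) a + orbitDist f (f x) (f y) + orbitDist f (f y) b := by
        linarith [orbitDist_comm f a (f x), orbitDist_triangle f a (f x) b,
          orbitDist_triangle f (f x) (f y) b]
    _ ≤ orbitDist f (f x) (f y) + ε := by linarith

end Compact

lemma injective_of_orbitDist_map_eq {X : Type*} [MetricSpace X] [BoundedSpace X] {f : X → X}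
    (hiso : ∀ x y, orbitDist f (f x) (f y) = orbitDist f x y) : Function.Injective f := by
  intro x y hxy
  have := dist_le_orbitDist f x y
  rwa [← hiso, hxy, orbitDist, funext fun _ => dist_self _, ciSup_const, dist_le_zero] at this

lemma iterateEquicontinuous_of_rightInverse {X : Type*} [PseudoMetricSpace X] [BoundedSpace X]
    {f g : X → X} (hiso : ∀ x y, orbitDist f (f x) (f y) = orbitDist f x y)
    (heq : IterateEquicontinuous f) (hg : Function.RightInverse g f) :
    IterateEquicontinuous g := by
  have hg_iterate (i : ℕ) (x y : X) : orbitDist f (g^[i] x) (g^[i] y) = orbitDist f x y := by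
    induction i generalizing x y with
    | zero => rfl
    | succ i ih => rw [Function.iterate_succ_apply, Function.iterate_succ_apply, ih, ← hiso, hg, hg]
  intro ε hε
  obtain ⟨δ, hδ, hsmall⟩ := (iterateEquicontinuous_iff_orbitDist f).1 heq ε hε
  exact ⟨δ, hδ, fun x y hxy i =>
    (dist_le_orbitDist f _ _).trans ((hg_iterate i x y).trans_le (hsmall x y hxy))⟩

theorem equicontinuous_surjective_homeo {X : Type*} [MetricSpace X] [CompactSpace X]
    (f : X → X) (hf : Continuous f) (hsurj : Function.Surjective f)
    (heq : ∀ ε > (0 : ℝ), ∃ δ > (0 : ℝ), ∀ x y : X, dist x y ≤ δ →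
      ∀ i : ℕ, dist (f^[i] x) (f^[i] y) ≤ ε) :
    Function.Bijective f ∧
      ∃ g : X → X, Function.LeftInverse g f ∧ Function.RightInverse g f ∧
        Continuous g ∧
        ∀ ε > (0 : ℝ), ∃ δ > (0 : ℝ), ∀ x y : X, dist x y ≤ δ →
          ∀ i : ℕ, dist (g^[i] x) (g^[i] y) ≤ ε := by
  have hiso := orbitDist_map_eq hsurj heq
  have hbij : Function.Bijective f := ⟨injective_of_orbitDist_map_eq hiso, hsurj⟩
  let e := Equiv.ofBijective f hbij
  exact ⟨hbij, e.symm, e.symm_apply_apply, e.apply_symm_apply,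
    (hf.homeoOfEquivCompactToT2 (f := e)).symm.continuous,
    iterateEquicontinuous_of_rightInverse hiso heq e.apply_symm_apply⟩
end

section
/- Let f : X → X be a minimal equicontinuous homeomorphism of a compact metric space with d(f(x), f(y)) = d(x,y) for an ultrametric d, and fix x ∈ X. For every ε > 0, letting l_ε = min{i > 0 : B_ε(x) ∩ f^i(B_ε(x)) ≠ ∅}, the space decomposes as a disjoint union X = ⊔_{i=0}^{l_ε−1} f^i(B_ε(x)), and f^{l_ε}(B_ε(x)) = B_ε(x). -/
open Filter Topology Metric Set

theorem ultrametric_ball_decomposition {X : Type*} [MetricSpace X] [CompactSpace X]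
    (ultra : ∀ x y z : X, dist x z ≤ max (dist x y) (dist y z))
    (f : X → X) (hf : Continuous f) (hbij : Function.Bijective f)
    (hiso : ∀ a b : X, dist (f a) (f b) = dist a b)
    (hmin : IsMinimalSet f Set.univ)
    (x : X) (ε : ℝ) (hε : 0 < ε) (l : ℕ) (hl0 : 0 < l)
    (hl1 : (Metric.closedBall x ε ∩ f^[l] '' Metric.closedBall x ε).Nonempty)
    (hl2 : ∀ i : ℕ, 0 < i → i < l →
      Metric.closedBall x ε ∩ f^[i] '' Metric.closedBall x ε = ∅) :
    f^[l] '' Metric.closedBall x ε = Metric.closedBall x ε ∧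
      (∀ i j : ℕ, i < j → j < l →
        f^[i] '' Metric.closedBall x ε ∩ f^[j] '' Metric.closedBall x ε = ∅) ∧
      (⋃ i ∈ Set.Iio l, f^[i] '' Metric.closedBall x ε) = Set.univ := by

  set B := Metric.closedBall x ε with hB
  have hiter : ∀ (i : ℕ) (a b : X), dist (f^[i] a) (f^[i] b) = dist a b := by
    intro i
    induction i with
    | zero => simp
    | succ n ih =>
      intro a b
      rw [Function.iterate_succ_apply', Function.iterate_succ_apply', hiso, ih]
  have hsurj : ∀ i : ℕ, Function.Surjective (f^[i]) := fun i => hbij.2.iterate i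
  have hinj : ∀ i : ℕ, Function.Injective (f^[i]) := fun i => hbij.1.iterate i
  have himg : ∀ i : ℕ, f^[i] '' B = Metric.closedBall (f^[i] x) ε := by
    intro i
    ext y
    constructor
    · rintro ⟨a, ha, rfl⟩
      simp only [hB, Metric.mem_closedBall] at ha ⊢
      rw [hiter]; exact ha
    · intro hy
      obtain ⟨a, rfl⟩ := hsurj i y
      exact ⟨a, by simpa [hB, Metric.mem_closedBall, hiter i] using hy, rfl⟩
  have hball_eq : ∀ a b : X, (Metric.closedBall a ε ∩ Metric.closedBall b ε).Nonempty →
      Metric.closedBall a ε = Metric.closedBall b ε := by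
    rintro a b ⟨z, hza, hzb⟩
    simp only [Metric.mem_closedBall] at hza hzb
    have hab : dist a b ≤ ε :=
      le_trans (ultra a z b) (max_le (by rwa [dist_comm]) hzb)
    ext y
    simp only [Metric.mem_closedBall]
    constructor
    · intro h
      exact le_trans (ultra y a b) (max_le h hab)
    · intro h
      exact le_trans (ultra y b a) (max_le h (by rwa [dist_comm]))
  have h1 : f^[l] '' B = B := by
    rw [himg]
    refine hball_eq _ _ ?_
    obtain ⟨z, hz1, hz2⟩ := hl1
    rw [himg] at hz2
    exact ⟨z, hz2, hz1⟩
  have h2 : ∀ i j : ℕ, i < j → j < l → f^[i] '' B ∩ f^[j] '' B = ∅ := by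
    intro i j hij hjl
    by_contra h
    obtain ⟨z, ⟨a, ha, hza⟩, ⟨b, hb, hzb⟩⟩ := Set.nonempty_iff_ne_empty.mpr h
    have : f^[i] a = f^[i] (f^[j - i] b) := by
      rw [hza, ← hzb, ← Function.iterate_add_apply]
      congr 1
      omega
    have hab : a = f^[j - i] b := hinj i this
    have : a ∈ B ∩ f^[j - i] '' B := ⟨ha, b, hb, hab.symm⟩
    rw [hl2 (j - i) (by omega) (by omega)] at this
    exact this
  refine ⟨h1, h2, ?_⟩
  set U := ⋃ i ∈ Set.Iio l, f^[i] '' B with hU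
  have hUne : U.Nonempty := by
    refine ⟨x, ?_⟩
    simp only [hU, Set.mem_iUnion, Set.mem_Iio]
    exact ⟨0, hl0, by simp [hB, Metric.mem_closedBall, le_of_lt hε]⟩
  have hUclosed : IsClosed U := by
    refine Set.Finite.isClosed_biUnion (Set.finite_Iio l) ?_
    intro i _
    exact ((isCompact_closedBall x ε).image (hf.iterate i)).isClosed
  have hUmaps : Set.MapsTo f U U := by
    intro y hy
    simp only [hU, Set.mem_iUnion, Set.mem_Iio] at hy ⊢
    obtain ⟨i, hil, a, ha, rfl⟩ := hy
    have hfy : f (f^[i] a) = f^[i + 1] a := (Function.iterate_succ_apply' f i a).symm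
    rcases Nat.lt_or_ge (i + 1) l with h | h
    · exact ⟨i + 1, h, a, ha, hfy.symm⟩
    · have hil1 : i + 1 = l := by omega
      refine ⟨0, hl0, ?_⟩
      have : f (f^[i] a) ∈ f^[l] '' B := ⟨a, ha, by rw [← hil1, hfy]⟩
      rw [h1] at this
      simpa using this
  rcases hmin.2.2.2 U (Set.subset_univ U) hUclosed hUmaps with h | h
  · rw [h] at hUne; exact absurd hUne Set.not_nonempty_empty
  · exact h
end

section
/- Let f : X → X be a minimal continuous self-map of a compact metric space such that every point of X is regularly recurrent. Then X is totally disconnected. -/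
open Filter Topology Metric Set

section AuxOC

variable {X : Type*} [MetricSpace X] [CompactSpace X] {f : X → X}

/-- Orbit closure under `f^[n]`. -/
def ocSet (f : X → X) (n : ℕ) (y : X) : Set X := closure (Set.range fun k => f^[n * k] y)

lemma ocSet_isClosed (f : X → X) (n : ℕ) (y : X) : IsClosed (ocSet f n y) :=
  isClosed_closure

lemma mem_ocSet_self (f : X → X) (n : ℕ) (y : X) : y ∈ ocSet f n y :=
  subset_closure ⟨0, by simp⟩

lemma ocSet_mono (hf : Continuous f) {n : ℕ} {y z : X} (hy : y ∈ ocSet f n z) :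
    ocSet f n y ⊆ ocSet f n z := by
  apply closure_minimal _ isClosed_closure
  rintro _ ⟨k, rfl⟩
  have h1 : f^[n * k] y ∈ closure (f^[n * k] '' Set.range fun j => f^[n * j] z) :=
    image_closure_subset_closure_image (hf.iterate _) (Set.mem_image_of_mem _ hy)
  refine closure_mono ?_ h1
  rintro _ ⟨_, ⟨j, rfl⟩, rfl⟩
  refine ⟨k + j, ?_⟩
  show f^[n * (k + j)] z = f^[n * k] (f^[n * j] z)
  rw [Nat.mul_add, Function.iterate_add_apply]

/-- Uniform continuity for finitely many iterates at once. -/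
lemma exists_unif_delta (N : ℕ) {δ : ℝ} (hδ : 0 < δ) (g : ℕ → X → X)
    (hg : ∀ m, Continuous (g m)) :
    ∃ δ' > 0, ∀ m < N, ∀ a b : X, dist a b < δ' → dist (g m a) (g m b) < δ := by
  induction N with
  | zero => exact ⟨1, one_pos, fun m hm => absurd hm (Nat.not_lt_zero m)⟩
  | succ N ih =>
    obtain ⟨δ₁, hδ₁, h₁⟩ := ih
    have hu : UniformContinuous (g N) := CompactSpace.uniformContinuous_of_continuous (hg N)
    rw [Metric.uniformContinuous_iff] at hu
    obtain ⟨δ₂, hδ₂, h₂⟩ := hu δ hδ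
    refine ⟨min δ₁ δ₂, lt_min hδ₁ hδ₂, fun m hm a b hab => ?_⟩
    rcases Nat.lt_succ_iff_lt_or_eq.mp hm with h | rfl
    · exact h₁ m h a b (hab.trans_le (min_le_left _ _))
    · exact h₂ (hab.trans_le (min_le_right _ _))

lemma mem_ocSet_back (hf : Continuous f) (hrr : ∀ x : X, RegularlyRecurrent f x)
    {n : ℕ} {y z : X} (hy : y ∈ ocSet f n z) : z ∈ ocSet f n y := by
  rw [ocSet, Metric.mem_closure_iff]
  intro δ hδ
  obtain ⟨n', hn', hrr'⟩ := hrr z (δ / 2) (by linarith)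
  obtain ⟨δ', hδ', hunif⟩ :=
    exists_unif_delta (n' + 1) (half_pos hδ) (fun m => f^[n * m]) (fun m => hf.iterate _)
  obtain ⟨_, ⟨k, rfl⟩, hk⟩ := Metric.mem_closure_iff.mp hy δ' hδ'
  set m := n' - k % n' with hmdef
  have hmod : k % n' < n' := Nat.mod_lt _ hn'
  have hdiv : n' * (k / n') + k % n' = k := Nat.div_add_mod k n'
  have hkm : n * (k + m) = (n * (k / n' + 1)) * n' := by
    have h : k + m = n' * (k / n' + 1) := by rw [Nat.mul_succ]; omega
    rw [h]; ring
  refine ⟨f^[n * m] y, ⟨m, rfl⟩, ?_⟩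
  have h1 : dist z (f^[n * (k + m)] z) ≤ δ / 2 := by
    rw [hkm]; exact hrr' _
  have h2 : dist (f^[n * m] y) (f^[n * (k + m)] z) < δ / 2 := by
    have he : f^[n * (k + m)] z = f^[n * m] (f^[n * k] z) := by
      have h3 : n * (k + m) = n * m + n * k := by ring
      rw [h3, Function.iterate_add_apply]
    rw [he]
    exact hunif m (by omega) y _ hk
  calc dist z (f^[n * m] y)
      ≤ dist z (f^[n * (k + m)] z) + dist (f^[n * (k + m)] z) (f^[n * m] y) :=
        dist_triangle _ _ _
    _ < δ / 2 + δ / 2 := by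
        rw [dist_comm (f^[n * (k + m)] z)]
        exact add_lt_add_of_le_of_lt h1 h2
    _ = δ := by ring

lemma ocSet_eq (hf : Continuous f) (hrr : ∀ x : X, RegularlyRecurrent f x)
    {n : ℕ} {y z : X} (hy : y ∈ ocSet f n z) : ocSet f n y = ocSet f n z :=
  subset_antisymm (ocSet_mono hf hy) (ocSet_mono hf (mem_ocSet_back hf hrr hy))

lemma ocSet_cover (hf : Continuous f) (hmin : IsMinimalSet f Set.univ)
    {n : ℕ} (hn : 0 < n) (x : X) :
    (⋃ j ∈ Finset.range n, ocSet f n (f^[j] x)) = Set.univ := by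
  set S := ⋃ j ∈ Finset.range n, ocSet f n (f^[j] x) with hS
  have hSclosed : IsClosed S := by
    apply Set.Finite.isClosed_biUnion (Finset.finite_toSet _)
    intro j _
    exact isClosed_closure
  have hxS : x ∈ S := by
    apply Set.mem_biUnion (Finset.mem_range.mpr hn)
    simpa using mem_ocSet_self f n x
  have hSmaps : Set.MapsTo f S S := by
    intro w hw
    simp only [hS, Set.mem_iUnion, exists_prop, Finset.mem_range] at hw ⊢
    obtain ⟨j, hj, hw⟩ := hw
    have hstep : f w ∈ ocSet f n (f^[j + 1] x) := by
      have h1 : f w ∈ closure (f '' Set.range fun k => f^[n * k] (f^[j] x)) :=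
        image_closure_subset_closure_image hf (Set.mem_image_of_mem _ hw)
      refine closure_mono ?_ h1
      rintro _ ⟨_, ⟨k, rfl⟩, rfl⟩
      refine ⟨k, ?_⟩
      show f^[n * k] (f^[j + 1] x) = f (f^[n * k] (f^[j] x))
      rw [← Function.iterate_succ_apply' f (n * k), ← Function.iterate_add_apply,
        ← Function.iterate_add_apply]
      congr 1
      omega
    rcases lt_or_eq_of_le (Nat.succ_le_of_lt hj) with h | h
    · exact ⟨j + 1, h, hstep⟩
    · refine ⟨0, hn, ?_⟩
      have hmem : f^[j + 1] x ∈ ocSet f n (f^[0] x) := by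
        simp only [Function.iterate_zero_apply]
        refine subset_closure ⟨1, ?_⟩
        show f^[n * 1] x = f^[j + 1] x
        rw [Nat.mul_one, ← h]
      exact ocSet_mono hf hmem hstep
  rcases hmin.2.2.2 S (Set.subset_univ S) hSclosed hSmaps with h | h
  · exact absurd (h ▸ hxS) (Set.notMem_empty x)
  · exact h

lemma ocSet_isOpen (hf : Continuous f) (hmin : IsMinimalSet f Set.univ)
    (hrr : ∀ x : X, RegularlyRecurrent f x) {n : ℕ} (hn : 0 < n) (x : X) :
    IsOpen (ocSet f n x) := by
  classical
  rw [← isClosed_compl_iff]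
  have hcomp : (ocSet f n x)ᶜ =
      ⋃ j ∈ (Finset.range n).filter (fun j => x ∉ ocSet f n (f^[j] x)),
        ocSet f n (f^[j] x) := by
    ext w
    constructor
    · intro hw
      have hwS : w ∈ ⋃ j ∈ Finset.range n, ocSet f n (f^[j] x) := by
        rw [ocSet_cover hf hmin hn x]; trivial
      simp only [Set.mem_iUnion, exists_prop] at hwS ⊢
      obtain ⟨j, hj, hwj⟩ := hwS
      refine ⟨j, Finset.mem_filter.mpr ⟨hj, ?_⟩, hwj⟩
      intro hx
      exact hw ((ocSet_eq hf hrr hx) ▸ hwj)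
    · intro hw
      simp only [Set.mem_iUnion, exists_prop, Finset.mem_filter] at hw
      obtain ⟨j, ⟨hj, hxj⟩, hwj⟩ := hw
      intro hwx
      apply hxj
      have h1 : ocSet f n w = ocSet f n x := ocSet_eq hf hrr hwx
      have h2 : ocSet f n w = ocSet f n (f^[j] x) := ocSet_eq hf hrr hwj
      rw [← h2, h1]
      exact mem_ocSet_self f n x
  rw [hcomp]
  apply Set.Finite.isClosed_biUnion (Finset.finite_toSet _)
  intro j _
  exact isClosed_closure

end AuxOC

theorem minimal_rr_totallyDisconnected {X : Type*} [MetricSpace X] [CompactSpace X]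
    (f : X → X) (hf : Continuous f) (hmin : IsMinimalSet f Set.univ)
    (hrr : ∀ x : X, RegularlyRecurrent f x) :
    TotallyDisconnectedSpace X := by
  rw [totallyDisconnectedSpace_iff_connectedComponent_singleton]
  intro x
  refine subset_antisymm ?_ (Set.singleton_subset_iff.mpr mem_connectedComponent)
  intro y hy
  rw [Set.mem_singleton_iff]
  have hd : dist y x ≤ 0 := by
    refine le_of_forall_pos_le_add fun ε hεpos => ?_
    rw [zero_add]
    obtain ⟨n, hn, hk⟩ := hrr x ε hεpos
    have hclopen : IsClopen (ocSet f n x) :=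
      ⟨ocSet_isClosed f n x, ocSet_isOpen hf hmin hrr hn x⟩
    have hsub : connectedComponent x ⊆ ocSet f n x :=
      hclopen.connectedComponent_subset (mem_ocSet_self f n x)
    have hball : ocSet f n x ⊆ Metric.closedBall x ε := by
      apply closure_minimal _ Metric.isClosed_closedBall
      rintro _ ⟨k, rfl⟩
      show f^[n * k] x ∈ Metric.closedBall x ε
      rw [Metric.mem_closedBall, dist_comm, Nat.mul_comm]
      exact hk k
    exact hball (hsub hy)
  exact dist_le_zero.mp hd
end

section
/- Let f : X → X be a minimal continuous self-map of a compact metric space such that every point of X is regularly recurrent. Then f is equicontinuous. -/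
open Filter Topology Metric Set

namespace MinimalRRAux

variable {X : Type*} [MetricSpace X]

/-- Closure of the orbit of `x` under `f^[n]`. -/
def orbC (f : X → X) (n : ℕ) (x : X) : Set X :=
  closure (Set.range fun k : ℕ => f^[k * n] x)

lemma isClosed_orbC (f : X → X) (n : ℕ) (x : X) : IsClosed (orbC f n x) :=
  isClosed_closure

lemma iter_mem_orbC (f : X → X) (n : ℕ) (x : X) (k : ℕ) : f^[k * n] x ∈ orbC f n x :=
  subset_closure ⟨k, rfl⟩

lemma mem_orbC_self (f : X → X) (n : ℕ) (x : X) : x ∈ orbC f n x := by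
  simpa using iter_mem_orbC f n x 0

lemma orbC_shift (f : X → X) (n : ℕ) (x : X) (j : ℕ) :
    orbC f n (f^[j * n] x) ⊆ orbC f n x := by
  apply closure_minimal _ (isClosed_orbC f n x)
  rintro w ⟨k, rfl⟩
  show f^[k * n] (f^[j * n] x) ∈ orbC f n x
  have h : f^[k * n] (f^[j * n] x) = f^[(k + j) * n] x := by
    rw [← Function.iterate_add_apply, ← add_mul]
  rw [h]
  exact iter_mem_orbC f n x (k + j)

lemma iterate_mapsTo (f : X → X) (hf : Continuous f) (n j : ℕ) (x : X) :
    Set.MapsTo f^[j] (orbC f n x) (orbC f n (f^[j] x)) := by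
  intro z hz
  have h1 : f^[j] '' (orbC f n x) ⊆
      closure (f^[j] '' (Set.range fun k : ℕ => f^[k * n] x)) :=
    image_closure_subset_closure_image (hf.iterate j)
  have h2 : f^[j] '' (Set.range fun k : ℕ => f^[k * n] x) ⊆
      Set.range fun k : ℕ => f^[k * n] (f^[j] x) := by
    rintro w ⟨v, ⟨k, rfl⟩, rfl⟩
    refine ⟨k, ?_⟩
    show f^[k * n] (f^[j] x) = f^[j] (f^[k * n] x)
    rw [← Function.iterate_add_apply, ← Function.iterate_add_apply, Nat.add_comm]
  exact closure_mono h2 (h1 ⟨z, hz, rfl⟩)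

lemma iter_mem_of_mem (f : X → X) (hf : Continuous f) (n k : ℕ) (x z : X)
    (hz : z ∈ orbC f n x) : f^[k * n] z ∈ orbC f n x :=
  orbC_shift f n x k (iterate_mapsTo f hf n (k * n) x hz)

lemma orbC_subset_of_mem (f : X → X) (hf : Continuous f) {n : ℕ} {x z : X}
    (hz : z ∈ orbC f n x) : orbC f n z ⊆ orbC f n x := by
  apply closure_minimal _ (isClosed_orbC f n x)
  rintro w ⟨k, rfl⟩
  exact iter_mem_of_mem f hf n k x z hz

lemma unif_family [CompactSpace X] (f : X → X) (hf : Continuous f) {ε : ℝ} (hε : 0 < ε)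
    (M : ℕ) :
    ∃ η > (0:ℝ), ∀ l ≤ M, ∀ a b : X, dist a b < η → dist (f^[l] a) (f^[l] b) < ε := by
  induction M with
  | zero =>
    refine ⟨ε, hε, fun l hl a b h => ?_⟩
    have : l = 0 := Nat.le_zero.mp hl
    simpa [this] using h
  | succ M ih =>
    obtain ⟨η, hη, H⟩ := ih
    have hu : UniformContinuous f^[M + 1] :=
      CompactSpace.uniformContinuous_of_continuous (hf.iterate (M + 1))
    obtain ⟨δ, hδ, Hδ⟩ := Metric.uniformContinuous_iff.mp hu ε hε
    refine ⟨min η δ, lt_min hη hδ, fun l hl a b h => ?_⟩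
    rcases Nat.lt_or_ge l (M + 1) with h1 | h1
    · exact H l (by omega) a b (lt_of_lt_of_le h (min_le_left _ _))
    · have : l = M + 1 := by omega
      subst this
      exact Hδ (lt_of_lt_of_le h (min_le_right _ _))

lemma mem_orbC_of_mem [CompactSpace X] (f : X → X) (hf : Continuous f)
    {x : X} (hx : RegularlyRecurrent f x) {n : ℕ} (hn : 0 < n)
    {z : X} (hz : z ∈ orbC f n x) : x ∈ orbC f n z := by
  show x ∈ closure (Set.range fun k : ℕ => f^[k * n] z)
  rw [Metric.mem_closure_iff]
  intro ε hε
  obtain ⟨m, hm, Hm⟩ := hx (ε / 2) (by positivity)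
  obtain ⟨η, hη, Hη⟩ := unif_family f hf (show (0:ℝ) < ε / 2 by positivity) (m * n)
  obtain ⟨b, hb, hjb⟩ := Metric.mem_closure_iff.mp hz η hη
  obtain ⟨j, rfl⟩ := hb
  set l := (m - j % m) % m with hl
  have hlm : l ≤ m := le_of_lt (Nat.mod_lt _ hm)
  have hd1 : dist (f^[l * n] z) (f^[l * n] (f^[j * n] x)) < ε / 2 :=
    Hη (l * n) (Nat.mul_le_mul_right n hlm) _ _ hjb
  have hcomp : f^[l * n] (f^[j * n] x) = f^[(l + j) * n] x := by
    rw [← Function.iterate_add_apply, ← add_mul]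
  have hdvd : m ∣ l + j := by
    have h1 : j % m < m := Nat.mod_lt _ hm
    rcases Nat.eq_zero_or_pos (j % m) with h0 | hpos
    · have hl0 : l = 0 := by simp [hl, h0]
      have : m ∣ j := Nat.dvd_of_mod_eq_zero h0
      simpa [hl0] using this
    · have hle : l = m - j % m := Nat.mod_eq_of_lt (by omega)
      apply Nat.dvd_of_mod_eq_zero
      have h2 : l % m = l := Nat.mod_eq_of_lt (by omega)
      rw [Nat.add_mod, h2, hle, Nat.sub_add_cancel (le_of_lt h1), Nat.mod_self]
  obtain ⟨c, hc⟩ := hdvd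
  have hret : dist x (f^[(l + j) * n] x) ≤ ε / 2 := by
    have h3 : (l + j) * n = (c * n) * m := by rw [hc]; ring
    rw [h3]
    exact Hm (c * n)
  refine ⟨f^[l * n] z, ⟨l, rfl⟩, ?_⟩
  have hd1' : dist (f^[(l + j) * n] x) (f^[l * n] z) < ε / 2 := by
    rw [← hcomp, dist_comm]; exact hd1
  calc dist x (f^[l * n] z)
      ≤ dist x (f^[(l + j) * n] x) + dist (f^[(l + j) * n] x) (f^[l * n] z) :=
        dist_triangle _ _ _
    _ < ε / 2 + ε / 2 := add_lt_add_of_le_of_lt hret hd1'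
    _ = ε := by ring

lemma orbC_eq_of_mem [CompactSpace X] (f : X → X) (hf : Continuous f)
    (hrr : ∀ x : X, RegularlyRecurrent f x) {n : ℕ} (hn : 0 < n)
    {x z : X} (hz : z ∈ orbC f n x) : orbC f n z = orbC f n x :=
  Set.Subset.antisymm (orbC_subset_of_mem f hf hz)
    (orbC_subset_of_mem f hf (mem_orbC_of_mem f hf (hrr x) hn hz))

lemma eq_univ (f : X → X) (hmin : IsMinimalSet f Set.univ) {S : Set X}
    (hne : S.Nonempty) (hcl : IsClosed S) (hm : Set.MapsTo f S S) : S = Set.univ := by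
  rcases hmin.2.2.2 S (Set.subset_univ S) hcl hm with h | h
  · exact absurd h hne.ne_empty
  · exact h

lemma exists_piece (f : X → X) (hf : Continuous f) (hmin : IsMinimalSet f Set.univ)
    {n : ℕ} (hn : 0 < n) (x₀ w : X) :
    ∃ i < n, w ∈ orbC f n (f^[i] x₀) := by
  classical
  set S : Set X := ⋃ i ∈ Finset.range n, orbC f n (f^[i] x₀) with hS
  have hcl : IsClosed S := isClosed_biUnion_finset fun i _ => isClosed_orbC f n _
  have hne : S.Nonempty := by
    refine ⟨x₀, Set.mem_biUnion (Finset.mem_range.mpr hn) ?_⟩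
    simpa using mem_orbC_self f n x₀
  have hmap : Set.MapsTo f S S := by
    intro z hz
    simp only [hS, Set.mem_iUnion, Finset.mem_range, exists_prop] at hz ⊢
    obtain ⟨i, hi, hzi⟩ := hz
    have h1 : f z ∈ orbC f n (f^[i + 1] x₀) := by
      have := iterate_mapsTo f hf n 1 (f^[i] x₀) hzi
      simpa [Function.iterate_succ_apply'] using this
    rcases Nat.lt_or_ge (i + 1) n with h | h
    · exact ⟨i + 1, h, h1⟩
    · have hieq : i + 1 = n := by omega
      refine ⟨0, hn, ?_⟩
      have h2 : orbC f n (f^[i + 1] x₀) ⊆ orbC f n (f^[0] x₀) := by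
        rw [hieq]
        simpa using orbC_shift f n x₀ 1
      exact h2 h1
  have huniv := eq_univ f hmin hne hcl hmap
  have hw : w ∈ S := huniv ▸ Set.mem_univ w
  simp only [hS, Set.mem_iUnion, Finset.mem_range, exists_prop] at hw
  exact hw

lemma mem_interior_orbC [CompactSpace X] (f : X → X) (hf : Continuous f)
    (hmin : IsMinimalSet f Set.univ) (hrr : ∀ x : X, RegularlyRecurrent f x)
    {n : ℕ} (hn : 0 < n) (y : X) : y ∈ interior (orbC f n y) := by
  classical
  set T : Set X := ⋃ i ∈ Finset.range n,
    (if y ∈ orbC f n (f^[i] y) then (∅ : Set X) else orbC f n (f^[i] y)) with hT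
  have hTcl : IsClosed T := by
    apply isClosed_biUnion_finset
    intro i _
    split
    · exact isClosed_empty
    · exact isClosed_orbC f n _
  have hyT : y ∉ T := by
    intro hmem
    simp only [hT, Set.mem_iUnion, Finset.mem_range, exists_prop] at hmem
    obtain ⟨i, hi, hmi⟩ := hmem
    by_cases hc : y ∈ orbC f n (f^[i] y)
    · rw [if_pos hc] at hmi; exact hmi
    · rw [if_neg hc] at hmi; exact hc hmi
  have hsub : Tᶜ ⊆ orbC f n y := by
    intro w hw
    obtain ⟨i, hi, hwi⟩ := exists_piece f hf hmin hn y w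
    by_cases hc : y ∈ orbC f n (f^[i] y)
    · have heq : orbC f n y = orbC f n (f^[i] y) := orbC_eq_of_mem f hf hrr hn hc
      rw [heq]; exact hwi
    · exfalso
      apply hw
      refine Set.mem_biUnion (Finset.mem_range.mpr hi) ?_
      rw [if_neg hc]; exact hwi
  exact mem_interior.mpr ⟨Tᶜ, hsub, hTcl.isOpen_compl, hyT⟩

end MinimalRRAux


theorem minimal_rr_equicontinuous {X : Type*} [MetricSpace X] [CompactSpace X]
    (f : X → X) (hf : Continuous f) (hmin : IsMinimalSet f Set.univ)
    (hrr : ∀ x : X, RegularlyRecurrent f x) :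
    ∀ ε > (0 : ℝ), ∃ δ > (0 : ℝ), ∀ x y : X, dist x y ≤ δ →
      ∀ i : ℕ, dist (f^[i] x) (f^[i] y) ≤ ε := by
  classical
  intro ε hε
  open MinimalRRAux in
  -- for each point, a small invariant orbit closure
  have key : ∀ y : X, ∃ n : ℕ, 0 < n ∧
      MinimalRRAux.orbC f n y ⊆ Metric.closedBall y (ε / 4) := by
    intro y
    obtain ⟨n, hn, H⟩ := hrr y (ε / 4) (by positivity)
    refine ⟨n, hn, closure_minimal ?_ Metric.isClosed_closedBall⟩
    rintro w ⟨k, rfl⟩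
    show f^[k * n] y ∈ Metric.closedBall y (ε / 4)
    rw [Metric.mem_closedBall, dist_comm]
    exact H k
  choose nn hnn hball using key
  -- finite subcover of the interiors
  have hcov : (Set.univ : Set X) ⊆ ⋃ y : X, interior (MinimalRRAux.orbC f (nn y) y) :=
    fun x _ => Set.mem_iUnion.mpr
      ⟨x, MinimalRRAux.mem_interior_orbC f hf hmin hrr (hnn x) x⟩
  obtain ⟨t, ht⟩ := isCompact_univ.elim_finite_subcover
    (fun y : X => interior (MinimalRRAux.orbC f (nn y) y)) (fun y => isOpen_interior) hcov
  set N : ℕ := ∏ y ∈ t, nn y with hN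
  have hNpos : 0 < N := Finset.prod_pos fun y _ => hnn y
  -- uniform regular recurrence with period N
  have huni : ∀ x : X, MinimalRRAux.orbC f N x ⊆ Metric.closedBall x (ε / 2) := by
    intro x
    refine closure_minimal ?_ Metric.isClosed_closedBall
    rintro w ⟨k, rfl⟩
    show f^[k * N] x ∈ Metric.closedBall x (ε / 2)
    have hx : x ∈ ⋃ y ∈ t, interior (MinimalRRAux.orbC f (nn y) y) := ht (Set.mem_univ x)
    obtain ⟨y, hyt, hxy⟩ : ∃ y ∈ t, x ∈ interior (MinimalRRAux.orbC f (nn y) y) := by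
      simpa using hx
    have hx2 : x ∈ MinimalRRAux.orbC f (nn y) y := interior_subset hxy
    obtain ⟨c, hc⟩ : nn y ∣ N := Finset.dvd_prod_of_mem nn hyt
    have hx3 : f^[k * N] x ∈ MinimalRRAux.orbC f (nn y) y := by
      have h4 : k * N = (k * c) * nn y := by rw [hc]; ring
      rw [h4]
      exact MinimalRRAux.iter_mem_of_mem f hf (nn y) (k * c) y x hx2
    have h1 : dist x y ≤ ε / 4 := Metric.mem_closedBall.mp (hball y hx2)
    have h2 : dist (f^[k * N] x) y ≤ ε / 4 := Metric.mem_closedBall.mp (hball y hx3)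
    rw [Metric.mem_closedBall]
    calc dist (f^[k * N] x) x ≤ dist (f^[k * N] x) y + dist y x := dist_triangle _ _ _
      _ ≤ ε / 4 + ε / 4 := add_le_add h2 (by rw [dist_comm]; exact h1)
      _ = ε / 2 := by ring
  -- Lebesgue number lemma
  have hcov2 : (Set.univ : Set X) ⊆ ⋃ z : X, interior (MinimalRRAux.orbC f N z) :=
    fun x _ => Set.mem_iUnion.mpr
      ⟨x, MinimalRRAux.mem_interior_orbC f hf hmin hrr hNpos x⟩
  obtain ⟨δ₀, hδ₀, Hleb⟩ := lebesgue_number_lemma_of_metric isCompact_univ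
    (fun z : X => isOpen_interior (s := MinimalRRAux.orbC f N z)) hcov2
  refine ⟨δ₀ / 2, by positivity, fun x y hxy i => ?_⟩
  obtain ⟨z, hz⟩ := Hleb x (Set.mem_univ x)
  have hxz : x ∈ MinimalRRAux.orbC f N z :=
    interior_subset (hz (Metric.mem_ball_self hδ₀))
  have hyz : y ∈ MinimalRRAux.orbC f N z := by
    refine interior_subset (hz ?_)
    rw [Metric.mem_ball, dist_comm]
    linarith
  have hxeq : MinimalRRAux.orbC f N x = MinimalRRAux.orbC f N z :=
    MinimalRRAux.orbC_eq_of_mem f hf hrr hNpos hxz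
  have hy' : y ∈ MinimalRRAux.orbC f N x := hxeq ▸ hyz
  have h5 : f^[i] y ∈ MinimalRRAux.orbC f N (f^[i] x) :=
    MinimalRRAux.iterate_mapsTo f hf N i x hy'
  have h6 : dist (f^[i] y) (f^[i] x) ≤ ε / 2 := Metric.mem_closedBall.mp (huni (f^[i] x) h5)
  rw [dist_comm] at h6
  linarith
end

section
/- Let f : X → X be a minimal continuous self-map of a compact metric space with every point regularly recurrent, and let x ∈ X, ε > 0. Choose n_x > 0 with the closure A_x of {f^{k n_x}(x) : k ≥ 0} contained in B_ε(x), and let l_x = min{l > 0 : A_x ∩ f^l(A_x) ≠ ∅}. Then f^{l_x}(A_x) = A_x, the sets f^i(A_x) for 0 ≤ i < l_x are pairwise disjoint, and X = ⊔_{i=0}^{l_x−1} f^i(A_x); in particular {f^i(A_x) : 0 ≤ i < l_x} is a clopen partition of X. -/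
open Filter Topology Metric Set

private lemma exists_unif_delta_s14 {X : Type*} [MetricSpace X] (g : X → X) (hg : Continuous g)
    (y : X) (ε : ℝ) (hε : 0 < ε) (m : ℕ) :
    ∃ δ > 0, ∀ j < m, ∀ z, dist y z < δ → dist (g^[j] y) (g^[j] z) ≤ ε := by
  induction m with
  | zero => exact ⟨1, one_pos, fun j hj => absurd hj (Nat.not_lt_zero j)⟩
  | succ m ih =>
    obtain ⟨δ₁, hδ₁, h₁⟩ := ih
    have hc : Continuous (g^[m]) := hg.iterate m
    obtain ⟨δ₂, hδ₂, h₂⟩ := Metric.continuous_iff.mp hc y ε hε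
    refine ⟨min δ₁ δ₂, lt_min hδ₁ hδ₂, fun j hj z hz => ?_⟩
    rcases Nat.lt_or_ge j m with h | h
    · exact h₁ j h z (hz.trans_le (min_le_left _ _))
    · have hjm : j = m := by omega
      subst hjm
      have := h₂ z (by rw [dist_comm]; exact hz.trans_le (min_le_right _ _))
      rw [dist_comm]
      exact this.le

theorem minimal_rr_clopen_partition {X : Type*} [MetricSpace X] [CompactSpace X]
    (f : X → X) (hf : Continuous f) (hmin : IsMinimalSet f Set.univ)
    (hrr : ∀ y : X, RegularlyRecurrent f y)
    (x : X) (ε : ℝ) (hε : 0 < ε) (n : ℕ) (hn : 0 < n)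
    (A : Set X) (hAdef : A = closure (Set.range fun k : ℕ => f^[k * n] x))
    (hA : A ⊆ Metric.closedBall x ε)
    (l : ℕ) (hl0 : 0 < l) (hl1 : (A ∩ f^[l] '' A).Nonempty)
    (hl2 : ∀ i : ℕ, 0 < i → i < l → A ∩ f^[i] '' A = ∅) :
    f^[l] '' A = A ∧
      (∀ i j : ℕ, i < j → j < l → f^[i] '' A ∩ f^[j] '' A = ∅) ∧
      (⋃ i ∈ Set.Iio l, f^[i] '' A) = Set.univ ∧
      ∀ i < l, IsClopen (f^[i] '' A) := by
  set g := f^[n] with hg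
  have hgc : Continuous g := hf.iterate n
  have hitg : ∀ k : ℕ, f^[k * n] = g^[k] := by
    intro k
    rw [hg, mul_comm, Function.iterate_mul]
  have hAdef' : A = closure (Set.range fun k : ℕ => g^[k] x) := by
    rw [hAdef]
    simp only [hitg]
  have hxA : x ∈ A := by
    rw [hAdef']
    exact subset_closure ⟨0, rfl⟩
  have hAne : A.Nonempty := ⟨x, hxA⟩
  have hAcl : IsClosed A := hAdef ▸ isClosed_closure
  have hAcp : IsCompact A := hAcl.isCompact
  have hgA : Set.MapsTo g A A := by
    intro a ha
    rw [hAdef'] at ha ⊢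
    have h1 : g a ∈ g '' closure (Set.range fun k : ℕ => g^[k] x) := ⟨a, ha, rfl⟩
    have h2 := image_closure_subset_closure_image (f := g) hgc h1
    refine closure_mono ?_ h2
    rintro _ ⟨_, ⟨k, rfl⟩, rfl⟩
    refine ⟨k + 1, ?_⟩
    show g^[k + 1] x = g (g^[k] x)
    exact Function.iterate_succ_apply' g k x
  -- minimality of A for g
  have hAmin : ∀ S ⊆ A, IsClosed S → Set.MapsTo g S S → S = ∅ ∨ S = A := by
    intro S hSA hScl hSg
    rcases S.eq_empty_or_nonempty with h | ⟨y, hyS⟩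
    · exact Or.inl h
    right
    have hxS : x ∈ S := by
      rw [← hScl.closure_eq, Metric.mem_closure_iff]
      intro η hη
      obtain ⟨m, hm, hmm⟩ := hrr x (η / 3) (by positivity)
      obtain ⟨δ, hδ, hδ'⟩ := exists_unif_delta_s14 g hgc y (η / 3) (by positivity) (m + 1)
      have hyA : y ∈ closure (Set.range fun k : ℕ => g^[k] x) := hAdef' ▸ hSA hyS
      obtain ⟨b, hb, hk⟩ := Metric.mem_closure_iff.mp hyA δ hδ
      obtain ⟨k, rfl⟩ := hb
      set j := m - k % m with hj
      have hjm : j < m + 1 := by omega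
      have hd1 : dist (g^[j] y) (g^[j] (g^[k] x)) ≤ η / 3 := hδ' j hjm _ hk
      have hkj : k + j = (k / m + 1) * m := by
        have h1 := Nat.mod_add_div k m
        have h2 : k % m < m := Nat.mod_lt _ hm
        have h3 : (k / m + 1) * m = m * (k / m) + m := by ring
        omega
      have hd2 : dist x (g^[j] (g^[k] x)) ≤ η / 3 := by
        have he : g^[j] (g^[k] x) = g^[k + j] x := by
          rw [add_comm, Function.iterate_add_apply]
        rw [he, ← hitg]
        have harith : (k + j) * n = ((k / m + 1) * n) * m := by
          rw [hkj]; ring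
        rw [harith]
        exact hmm _
      have hmem : g^[j] y ∈ S := hSg.iterate j hyS
      refine ⟨g^[j] y, hmem, ?_⟩
      calc dist x (g^[j] y) ≤ dist x (g^[j] (g^[k] x)) + dist (g^[j] (g^[k] x)) (g^[j] y) :=
            dist_triangle _ _ _
        _ ≤ η / 3 + η / 3 := add_le_add hd2 (by rw [dist_comm] at hd1; exact hd1)
        _ < η := by linarith
    refine Set.Subset.antisymm hSA ?_
    rw [hAdef']
    refine hScl.closure_subset_iff.mpr ?_
    rintro _ ⟨k, rfl⟩
    exact hSg.iterate k hxS
  -- basic facts about B = f^[l] '' A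
  have hBcl : IsClosed (f^[l] '' A) := (hAcp.image (hf.iterate l)).isClosed
  have hcomm : ∀ a : X, g (f^[l] a) = f^[l] (g a) := by
    intro a
    rw [hg, ← Function.iterate_add_apply, ← Function.iterate_add_apply, add_comm]
  have hgB : Set.MapsTo g (f^[l] '' A) (f^[l] '' A) := by
    rintro _ ⟨a, ha, rfl⟩
    exact ⟨g a, hgA ha, (hcomm a).symm⟩
  have hBmin : ∀ S ⊆ f^[l] '' A, IsClosed S → Set.MapsTo g S S → S = ∅ ∨ S = f^[l] '' A := by
    intro S hSB hScl hSg
    rcases S.eq_empty_or_nonempty with h | ⟨s, hsS⟩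
    · exact Or.inl h
    right
    set T := A ∩ f^[l] ⁻¹' S with hT
    have hTA : T ⊆ A := Set.inter_subset_left
    have hTcl : IsClosed T := hAcl.inter (hScl.preimage (hf.iterate l))
    have hTg : Set.MapsTo g T T := by
      rintro a ⟨haA, haS⟩
      refine ⟨hgA haA, ?_⟩
      rw [Set.mem_preimage, ← hcomm]
      exact hSg haS
    have hTne : T.Nonempty := by
      obtain ⟨a, haA, rfl⟩ := hSB hsS
      exact ⟨a, haA, hsS⟩
    rcases hAmin T hTA hTcl hTg with h | h
    · exact absurd h hTne.ne_empty
    · refine Set.Subset.antisymm hSB ?_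
      rintro _ ⟨a, haA, rfl⟩
      have haT : a ∈ T := h ▸ haA
      exact haT.2
  -- f^[l] '' A = A
  have hIcl : IsClosed (A ∩ f^[l] '' A) := hAcl.inter hBcl
  have hIg : Set.MapsTo g (A ∩ f^[l] '' A) (A ∩ f^[l] '' A) := by
    rintro a ⟨h1, h2⟩
    exact ⟨hgA h1, hgB h2⟩
  have hBA : f^[l] '' A = A := by
    rcases hAmin _ Set.inter_subset_left hIcl hIg with h | h
    · exact absurd h hl1.ne_empty
    rcases hBmin _ Set.inter_subset_right hIcl hIg with h' | h'
    · exact absurd h' hl1.ne_empty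
    rw [← h', h]
  -- disjointness
  have hmaps : ∀ k : ℕ, Set.MapsTo (f^[k * n]) A A := by
    intro k
    rw [hitg k]
    exact hgA.iterate k
  have hdisj : ∀ i j : ℕ, i < j → j < l → f^[i] '' A ∩ f^[j] '' A = ∅ := by
    intro i j hij hjl
    by_contra h
    obtain ⟨z, ⟨a, haA, hza⟩, ⟨b, hbA, hzb⟩⟩ := Set.nonempty_iff_ne_empty.mpr h
    have hK : i ≤ j * n := le_trans hij.le (Nat.le_mul_of_pos_right j hn)
    have h1 : f^[j * n - i] z ∈ A := by
      rw [← hza, ← Function.iterate_add_apply, Nat.sub_add_cancel hK]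
      exact hmaps j haA
    have h2 : f^[j * n - i] z ∈ f^[j - i] '' A := by
      rw [← hzb, ← Function.iterate_add_apply]
      have harith : j * n - i + j = (j - i) + j * n := by omega
      rw [harith, Function.iterate_add_apply]
      exact ⟨f^[j * n] b, hmaps j hbA, rfl⟩
    have hmem : f^[j * n - i] z ∈ A ∩ f^[j - i] '' A := ⟨h1, h2⟩
    rw [hl2 (j - i) (by omega) (by omega)] at hmem
    exact absurd hmem (Set.notMem_empty _)
  have hdisj' : ∀ i j : ℕ, i < l → j < l → i ≠ j → f^[i] '' A ∩ f^[j] '' A = ∅ := by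
    intro i j hi hj hne
    rcases hne.lt_or_gt with h | h
    · exact hdisj i j h hj
    · rw [Set.inter_comm]; exact hdisj j i h hi
  -- covering
  have hcover : (⋃ i ∈ Set.Iio l, f^[i] '' A) = Set.univ := by
    set Y := ⋃ i ∈ Set.Iio l, f^[i] '' A with hY
    have hYcl : IsClosed Y := by
      refine Set.Finite.isClosed_biUnion (Set.finite_Iio l) ?_
      intro i _
      exact (hAcp.image (hf.iterate i)).isClosed
    have hYf : Set.MapsTo f Y Y := by
      intro z hz
      simp only [hY, Set.mem_iUnion, Set.mem_Iio] at hz ⊢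
      obtain ⟨i, hi, a, haA, rfl⟩ := hz
      by_cases hc : i + 1 < l
      · exact ⟨i + 1, hc, a, haA, Function.iterate_succ_apply' f i a⟩
      · have hi1 : i + 1 = l := by omega
        have he : f (f^[i] a) = f^[l] a := by
          rw [← hi1, Function.iterate_succ_apply']
        have hmemA : f (f^[i] a) ∈ A := by
          rw [he, ← hBA]
          exact ⟨a, haA, rfl⟩
        exact ⟨0, hl0, f (f^[i] a), hmemA, by rw [Function.iterate_zero_apply]⟩
    have hYne : Y.Nonempty := by
      refine ⟨x, ?_⟩
      simp only [hY, Set.mem_iUnion, Set.mem_Iio]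
      exact ⟨0, hl0, x, hxA, by rw [Function.iterate_zero_apply]⟩
    obtain ⟨-, -, -, hminS⟩ := hmin
    rcases hminS Y (Set.subset_univ Y) hYcl hYf with h | h
    · exact absurd h hYne.ne_empty
    · exact h
  refine ⟨hBA, hdisj, hcover, ?_⟩
  intro i hil
  refine ⟨(hAcp.image (hf.iterate i)).isClosed, ?_⟩
  rw [← isClosed_compl_iff]
  have hcompl : (f^[i] '' A)ᶜ = ⋃ j ∈ {j : ℕ | j < l ∧ j ≠ i}, f^[j] '' A := by
    ext z
    simp only [Set.mem_compl_iff, Set.mem_iUnion, Set.mem_setOf_eq]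
    constructor
    · intro hz
      have hzY : z ∈ ⋃ j ∈ Set.Iio l, f^[j] '' A := by rw [hcover]; trivial
      simp only [Set.mem_iUnion, Set.mem_Iio] at hzY
      obtain ⟨j, hj, hzj⟩ := hzY
      refine ⟨j, ⟨hj, ?_⟩, hzj⟩
      rintro rfl
      exact hz hzj
    · rintro ⟨j, ⟨hj, hji⟩, hzj⟩ hz
      have hd := hdisj' i j hil hj (Ne.symm hji)
      have : z ∈ f^[i] '' A ∩ f^[j] '' A := ⟨hz, hzj⟩
      rw [hd] at this
      exact Set.notMem_empty _ this
  rw [hcompl]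
  refine Set.Finite.isClosed_biUnion ((Set.finite_Iio l).subset fun j hj => hj.1) ?_
  intro j _
  exact (hAcp.image (hf.iterate j)).isClosed
end

section
/- Let f : X → X be a continuous self-map of a compact metric space and x ∈ X. Suppose that for every ε > 0 there is x_ε ∈ X whose ω-limit set is a minimal set consisting of regularly recurrent points, and limsup_{i→∞} d(f^i(x), f^i(x_ε)) ≤ ε. Then ω(x,f) is a minimal set for f and ω(x,f) ⊆ RR(f). -/
open Filter Topology Metric Set

/-!
Fix `y ∈ ω(x, f)` and `ε > 0`. Passing to a subsequence along which `f^i(x)` tends to `y` and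
`f^i(x_ε)` converges, the limsup bound yields `z ∈ ω(x_ε, f)` whose whole orbit stays within `ε`
of the orbit of `y`. Regular recurrence of `z` then transfers to `y` up to `3ε`, and since the orbit
of every point of the minimal set `ω(x_ε, f)` is dense in it, the orbit of any `y ∈ ω(x, f)` comes
`3ε`-close to any other point of `ω(x, f)`. Hence every orbit in `ω(x, f)` is dense, i.e.
`ω(x, f)` is minimal.
-/

section OmegaLimit

variable {X : Type*} [TopologicalSpace X]

theorem mem_omegaLimitSeq_iff_mapClusterPt [FirstCountableTopology X] {u : ℕ → X} {y : X} :
    y ∈ omegaLimitSeq u ↔ MapClusterPt y atTop u :=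
  ⟨fun ⟨_, hφ, hy⟩ => hy.mapClusterPt.of_comp hφ.tendsto_atTop, MapClusterPt.tendsto_subseq⟩

theorem isClosed_omegaLimitSeq [FirstCountableTopology X] (u : ℕ → X) :
    IsClosed (omegaLimitSeq u) := by
  have : omegaLimitSeq u = {y | ClusterPt y (map u atTop)} :=
    Set.ext fun _ => mem_omegaLimitSeq_iff_mapClusterPt
  exact this ▸ isClosed_setOfPred_clusterPt

theorem omegaLimitSeq_nonempty [FirstCountableTopology X] [CompactSpace X] (u : ℕ → X) :
    (omegaLimitSeq u).Nonempty :=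
  let ⟨a, φ, hφ, ha⟩ := CompactSpace.tendsto_subseq u
  ⟨a, φ, hφ, ha⟩

theorem mapsTo_omegaLimitPt [FirstCountableTopology X] {f : X → X} (hf : Continuous f) (x : X) :
    MapsTo f (omegaLimitPt f x) (omegaLimitPt f x) := by
  intro y hy
  rw [omegaLimitPt, mem_omegaLimitSeq_iff_mapClusterPt] at hy ⊢
  have hshift : (f ∘ fun i => f^[i] x) = (fun i => f^[i] x) ∘ (· + 1) :=
    funext fun i => (Function.iterate_succ_apply' f i x).symm
  have hfy := hy.continuousAt_comp hf.continuousAt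
  rw [hshift] at hfy
  exact hfy.of_comp (tendsto_add_atTop_nat 1)

end OmegaLimit

section Minimal

variable {X : Type*} [TopologicalSpace X] {f : X → X} {M : Set X}

theorem IsMinimalSet.subset_closure_range_iterate (hf : Continuous f) (hM : IsMinimalSet f M)
    {z : X} (hz : z ∈ M) : M ⊆ closure (range fun t => f^[t] z) := by
  obtain ⟨-, hMc, hMf, hmin⟩ := hM
  have hOM : closure (range fun t => f^[t] z) ⊆ M :=
    closure_minimal (range_subset_iff.2 fun t => hMf.iterate t hz) hMc
  have hO : MapsTo f (closure (range fun t => f^[t] z)) (closure (range fun t => f^[t] z)) :=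
    MapsTo.closure (fun _ ⟨t, ht⟩ => ⟨t + 1, ht ▸ Function.iterate_succ_apply' f t z⟩) hf
  rcases hmin _ hOM isClosed_closure hO with hempty | heq
  · exact absurd hempty (Nonempty.ne_empty ⟨z, subset_closure ⟨0, rfl⟩⟩)
  · exact heq.ge

theorem isMinimalSet_of_subset_closure_range_iterate (hne : M.Nonempty) (hM : IsClosed M)
    (hMf : MapsTo f M M) (hdense : ∀ y ∈ M, M ⊆ closure (range fun t => f^[t] y)) :
    IsMinimalSet f M := by
  refine ⟨hne, hM, hMf, fun S hSM hS hSf => ?_⟩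
  rcases S.eq_empty_or_nonempty with hempty | ⟨y, hy⟩
  · exact Or.inl hempty
  · exact Or.inr <| hSM.antisymm <| (hdense y (hSM hy)).trans <|
      closure_minimal (range_subset_iff.2 fun t => hSf.iterate t hy) hS

end Minimal

section Approximation

variable {X : Type*} [PseudoMetricSpace X]

theorem dist_le_of_tendsto_of_limsup_dist_le {u v : ℕ → X} {a b : X} {ε : ℝ} {φ : ℕ → ℕ}
    (hbdd : IsBoundedUnder (· ≤ ·) atTop fun i => dist (u i) (v i))
    (hls : limsup (fun i => dist (u i) (v i)) atTop ≤ ε) (hφ : Tendsto φ atTop atTop)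
    (hu : Tendsto (u ∘ φ) atTop (𝓝 a)) (hv : Tendsto (v ∘ φ) atTop (𝓝 b)) :
    dist a b ≤ ε := by
  refine le_of_forall_gt_imp_ge_of_dense fun c hc => ?_
  have hlt := hφ.eventually (eventually_lt_of_limsup_lt (hls.trans_lt hc) hbdd)
  exact le_of_tendsto (hu.dist hv) (hlt.mono fun _ h => h.le)

theorem exists_mem_omegaLimitPt_forall_dist_iterate_le [CompactSpace X] {f : X → X}
    (hf : Continuous f) {x x' : X} {ε : ℝ}
    (hls : limsup (fun i => dist (f^[i] x) (f^[i] x')) atTop ≤ ε) {y : X}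
    (hy : y ∈ omegaLimitPt f x) :
    ∃ z ∈ omegaLimitPt f x', ∀ t, dist (f^[t] y) (f^[t] z) ≤ ε := by
  obtain ⟨φ, hφ, hxφ⟩ := hy
  obtain ⟨z, ψ, hψ, hx'φψ⟩ := CompactSpace.tendsto_subseq fun j => f^[φ j] x'
  refine ⟨z, ⟨φ ∘ ψ, hφ.comp hψ, hx'φψ⟩, fun t => ?_⟩
  have hbdd : IsBoundedUnder (· ≤ ·) atTop fun i => dist (f^[i] x) (f^[i] x') :=
    isBoundedUnder_of ⟨diam (univ : Set X),
      fun _ => dist_le_diam_of_mem isCompact_univ.isBounded trivial trivial⟩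
  have hshift : ∀ w : X, (fun i => f^[i] w) ∘ (fun j => t + φ (ψ j)) =
      f^[t] ∘ ((fun j => f^[φ j] w) ∘ ψ) :=
    fun w => funext fun j => Function.iterate_add_apply f t (φ (ψ j)) w
  refine dist_le_of_tendsto_of_limsup_dist_le (φ := fun j => t + φ (ψ j)) hbdd hls
    (tendsto_atTop_mono (fun _ => Nat.le_add_left _ _) (hφ.comp hψ).tendsto_atTop) ?_ ?_
  · rw [hshift]
    exact ((hf.iterate t).tendsto y).comp (hxφ.comp hψ.tendsto_atTop)
  · rw [hshift]
    exact ((hf.iterate t).tendsto z).comp hx'φψ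

theorem subset_closure_range_iterate_of_forall_dist_iterate_le {f : X → X} (hf : Continuous f)
    {A : Set X} (happrox : ∀ ε > 0, ∃ M, IsMinimalSet f M ∧
      ∀ a ∈ A, ∃ z ∈ M, ∀ t, dist (f^[t] a) (f^[t] z) ≤ ε)
    {y : X} (hy : y ∈ A) : A ⊆ closure (range fun t => f^[t] y) := by
  intro a ha
  refine Metric.mem_closure_iff.2 fun ε hε => ?_
  obtain ⟨M, hM, hMA⟩ := happrox (ε / 3) (by positivity)
  obtain ⟨z, hzM, hyz⟩ := hMA y hy
  obtain ⟨w, hwM, haw⟩ := hMA a ha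
  obtain ⟨_, ⟨t, rfl⟩, hwt⟩ := Metric.mem_closure_iff.1
    (hM.subset_closure_range_iterate hf hzM hwM) (ε / 3) (by positivity)
  have haw₀ : dist a w ≤ ε / 3 := by simpa using haw 0
  have hzy : dist (f^[t] z) (f^[t] y) ≤ ε / 3 := dist_comm (f^[t] y) (f^[t] z) ▸ hyz t
  refine ⟨f^[t] y, ⟨t, rfl⟩, ?_⟩
  calc dist a (f^[t] y) ≤ dist a w + dist w (f^[t] z) + dist (f^[t] z) (f^[t] y) :=
        dist_triangle4 _ _ _ _
    _ < ε := by linarith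

theorem RegularlyRecurrent.of_forall_dist_iterate_le {f : X → X} {y : X}
    (happrox : ∀ ε > 0, ∃ z, RegularlyRecurrent f z ∧ ∀ t, dist (f^[t] y) (f^[t] z) ≤ ε) :
    RegularlyRecurrent f y := by
  intro ε hε
  obtain ⟨z, hz, hyz⟩ := happrox (ε / 3) (by positivity)
  obtain ⟨n, hn, hzn⟩ := hz (ε / 3) (by positivity)
  refine ⟨n, hn, fun k => ?_⟩
  have hyz₀ : dist y z ≤ ε / 3 := by simpa using hyz 0
  have hzy := dist_comm (f^[k * n] y) (f^[k * n] z) ▸ hyz (k * n)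
  calc dist y (f^[k * n] y)
      ≤ dist y z + dist z (f^[k * n] z) + dist (f^[k * n] z) (f^[k * n] y) :=
        dist_triangle4 _ _ _ _
    _ ≤ ε := by linarith [hzn k]

end Approximation

theorem omegaLimit_minimal_rr_of_approx {X : Type*} [MetricSpace X] [CompactSpace X]
    (f : X → X) (hf : Continuous f) (x : X)
    (h : ∀ ε > (0 : ℝ), ∃ xe : X,
      IsMinimalSet f (omegaLimitPt f xe) ∧
      (∀ z ∈ omegaLimitPt f xe, RegularlyRecurrent f z) ∧
      Filter.limsup (fun i => dist (f^[i] x) (f^[i] xe)) Filter.atTop ≤ ε) :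
    IsMinimalSet f (omegaLimitPt f x) ∧
      ∀ z ∈ omegaLimitPt f x, RegularlyRecurrent f z := by
  have happrox : ∀ ε > 0, ∃ xe, IsMinimalSet f (omegaLimitPt f xe) ∧
      (∀ z ∈ omegaLimitPt f xe, RegularlyRecurrent f z) ∧
      ∀ y ∈ omegaLimitPt f x, ∃ z ∈ omegaLimitPt f xe, ∀ t, dist (f^[t] y) (f^[t] z) ≤ ε :=
    fun ε hε =>
      let ⟨xe, hmin, hrr, hls⟩ := h ε hε
      ⟨xe, hmin, hrr, fun _ hy => exists_mem_omegaLimitPt_forall_dist_iterate_le hf hls hy⟩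
  refine ⟨isMinimalSet_of_subset_closure_range_iterate (omegaLimitSeq_nonempty _)
    (isClosed_omegaLimitSeq _) (mapsTo_omegaLimitPt hf x) fun y hy =>
      subset_closure_range_iterate_of_forall_dist_iterate_le hf (fun ε hε => ?_) hy,
    fun y hy => RegularlyRecurrent.of_forall_dist_iterate_le fun ε hε => ?_⟩
  · obtain ⟨xe, hmin, -, hxe⟩ := happrox ε hε
    exact ⟨_, hmin, hxe⟩
  · obtain ⟨xe, -, hrr, hxe⟩ := happrox ε hε
    obtain ⟨z, hz, hyz⟩ := hxe y hy
    exact ⟨z, hrr z hz, hyz⟩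
end
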